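/- Let G be a connected graph with minimum degree at least 2, let H be a connected factor of G with 1 ≤ deg_H(v) < deg_G(v) for all v, and let B : V(G) → {0,1} be a function with an even number of vertices mapped to 1. Then G has a factor F such that deg_F(v) ≡ B(v) (mod 2) for every vertex v. -/

import Mathlib

open SimpleGraph
open scoped symmDiff

/-- The degree of `v` in `H`, defined as the cardinality of its neighbor set. -/
noncomputable def edeg {V : Type*} (H : SimpleGraph V) (v : V) : ℕ := (H.neighborSet v).ncard

/-- A factor of `G`: a spanning subgraph with all degrees at least 1. -/
def IsFactor {V : Type*} (G H : SimpleGraph V) : Prop :=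
  H ≤ G ∧ ∀ v, 1 ≤ edeg H v

/-- An `X`-parity-factor of `G`: a factor whose odd-degree vertices are exactly `X`. -/
def IsParityFactor {V : Type*} (G H : SimpleGraph V) (X : Set V) : Prop :=
  IsFactor G H ∧ ∀ v, (Odd (edeg H v) ↔ v ∈ X)

/-- `G` has the strong parity property if every even-sized vertex subset
admits an `X`-parity-factor. -/
def StrongParity {V : Type*} (G : SimpleGraph V) : Prop :=
  ∀ X : Set V, Even X.ncard → ∃ H, IsParityFactor G H X

/-!
Let `D = G \ H`; since `deg_H v < deg_G v`, every vertex has an edge of `D`. It remains to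
correct the parities of `D` inside `H`. The degree-parity vectors of spanning subgraphs of `H`
form a `ZMod 2`-subspace (symmetric difference adds degrees mod 2), which contains
`δ u + δ w` whenever a walk joins `u` and `w`. As `H` is connected, it therefore contains every
vector of total sum zero, in particular `B + deg_D`. A realising `J ≤ H` is edge-disjoint from
`D`, so `F = D ⊔ J` has degrees `deg_D + deg_J ≡ B`.
-/

section

variable {V : Type*}

lemma Set.ncard_symmDiff_add_two_mul_ncard_inter {α : Type*} [Finite α] (s t : Set α) :
    (s ∆ t).ncard + 2 * (s ∩ t).ncard = s.ncard + t.ncard := by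
  have h : s ∆ t ∪ s ∩ t = s ∪ t := symmDiff_sup_inf s t
  rw [← Set.ncard_union_add_ncard_inter, ← h,
    Set.ncard_union_eq (s := s ∆ t) (t := s ∩ t) (disjoint_symmDiff_inf s t)]
  ring

lemma edeg_sdiff [Finite V] {G H : SimpleGraph V} (h : H ≤ G) (v : V) :
    edeg (G \ H) v = edeg G v - edeg H v := by
  rw [edeg, neighborSet_sdiff, Set.ncard_sdiff (neighborSet_mono h v)]; rfl

lemma edeg_mono [Finite V] {G H : SimpleGraph V} (h : H ≤ G) (v : V) : edeg H v ≤ edeg G v :=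
  Set.ncard_le_ncard (neighborSet_mono h v)

lemma cast_edeg_symmDiff [Finite V] (G H : SimpleGraph V) (v : V) :
    (edeg (G ∆ H) v : ZMod 2) = edeg G v + edeg H v := by
  have : (G ∆ H).neighborSet v = G.neighborSet v ∆ H.neighborSet v := by
    ext w; simp [symmDiff_def]
  rw [edeg, edeg, edeg, this, ← Nat.cast_add, ← Set.ncard_symmDiff_add_two_mul_ncard_inter]
  push_cast
  rw [show (2 : ZMod 2) = 0 from rfl, zero_mul, add_zero]

lemma cast_edeg_edge [Finite V] [DecidableEq V] {u w : V} (h : u ≠ w) (v : V) :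
    (edeg (edge u w) v : ZMod 2) =
      (Pi.single u 1 : V → ZMod 2) v + (Pi.single w 1 : V → ZMod 2) v := by
  have hnbr : (edge u w).neighborSet v = if v = u then {w} else if v = w then {u} else ∅ := by
    ext x; split_ifs <;> simp [edge_adj] <;> grind
  rw [edeg, hnbr]
  split_ifs <;> simp_all

lemma sum_cast_edeg [Fintype V] (G : SimpleGraph V) : ∑ v, (edeg G v : ZMod 2) = 0 := by
  classical
  have (v : V) : edeg G v = G.degree v := by
    rw [edeg, ← Nat.card_coe_set_eq, Nat.card_eq_fintype_card, card_neighborSet_eq_degree]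
  simp only [this]
  rw [← Nat.cast_sum, sum_degrees_eq_twice_card_edges, Nat.cast_mul,
    show ((2 : ℕ) : ZMod 2) = 0 from rfl, zero_mul]

lemma ZMod.sum_eq_ncard_setOf_eq_one [Fintype V] (B : V → ZMod 2) :
    ∑ v, B v = ({v | B v = 1}.ncard : ZMod 2) := by
  classical
  have (v : V) : B v = if B v = 1 then 1 else 0 := by
    generalize B v = b; revert b; decide
  rw [Finset.sum_congr rfl fun v _ => this v, Finset.sum_boole, Set.ncard_eq_toFinset_card']
  simp

def degreeParities [Finite V] (H : SimpleGraph V) : Submodule (ZMod 2) (V → ZMod 2) where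
  carrier := {p | ∃ J ≤ H, ∀ v, (edeg J v : ZMod 2) = p v}
  zero_mem' := ⟨⊥, bot_le, fun v => by simp [edeg]⟩
  add_mem' := by
    rintro p q ⟨J, hJ, hp⟩ ⟨K, hK, hq⟩
    exact ⟨J ∆ K, symmDiff_le_sup.trans (sup_le hJ hK), fun v => by
      rw [cast_edeg_symmDiff, hp, hq, Pi.add_apply]⟩
  smul_mem' := by
    rintro c p ⟨J, hJ, hp⟩
    obtain rfl | rfl : c = 0 ∨ c = 1 := by revert c; decide
    · exact ⟨⊥, bot_le, fun v => by simp [edeg]⟩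
    · exact ⟨J, hJ, by simpa using hp⟩

lemma SimpleGraph.Adj.single_add_single_mem_degreeParities [Finite V] [DecidableEq V]
    {H : SimpleGraph V} {u w : V} (h : H.Adj u w) :
    Pi.single u 1 + Pi.single w 1 ∈ degreeParities H :=
  ⟨edge u w, (edge_le_iff H).2 (Or.inr h), cast_edeg_edge h.ne⟩

lemma SimpleGraph.Walk.single_add_single_mem_degreeParities [Finite V] [DecidableEq V]
    {H : SimpleGraph V} {u w : V} (p : H.Walk u w) :
    Pi.single u 1 + Pi.single w 1 ∈ degreeParities H := by
  induction p with
  | nil => simp [← Pi.single_add, CharTwo.add_self_eq_zero]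
  | @cons a b w h _ ih =>
    have := add_mem h.single_add_single_mem_degreeParities ih
    rwa [add_assoc, ← add_assoc (Pi.single b 1), ← Pi.single_add, CharTwo.add_self_eq_zero,
      Pi.single_zero, zero_add] at this

lemma SimpleGraph.Connected.mem_degreeParities [Fintype V] {H : SimpleGraph V}
    (hH : H.Connected) {f : V → ZMod 2} (hf : ∑ v, f v = 0) : f ∈ degreeParities H := by
  classical
  obtain ⟨r⟩ := hH.nonempty
  -- the `Pi.single r 1` terms cancel because `∑ v, f v = 0`
  have key : f = ∑ v, f v • (Pi.single r 1 + Pi.single v 1) := by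
    simp only [smul_add, Finset.sum_add_distrib, ← Finset.sum_smul, hf, zero_smul, zero_add]
    ext x
    simp [Pi.single_apply]
  rw [key]
  exact Submodule.sum_mem _ fun v _ =>
    Submodule.smul_mem _ _ (hH.preconnected r v).some.single_add_single_mem_degreeParities

end

theorem binary_factor_exists_general {V : Type*} [Fintype V]
    (G : SimpleGraph V)
    (H : SimpleGraph V) (hle : H ≤ G) (hHconn : H.Connected)
    (hHdeg : ∀ v, 1 ≤ edeg H v ∧ edeg H v < edeg G v)
    (B : V → ZMod 2) (hB : Even {v : V | B v = 1}.ncard) :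
    ∃ F : SimpleGraph V, IsFactor G F ∧ ∀ v, (edeg F v : ZMod 2) = B v := by
  set D := G \ H
  have hD (v : V) : 1 ≤ edeg D v := by
    have := (hHdeg v).2
    rw [edeg_sdiff hle]
    omega
  have hsum : ∑ v, (B v + edeg D v) = 0 := by
    rw [Finset.sum_add_distrib, sum_cast_edeg, ZMod.sum_eq_ncard_setOf_eq_one,
      ZMod.natCast_eq_zero_iff_even.2 hB, add_zero]
  obtain ⟨J, hJH, hJ⟩ := hHconn.mem_degreeParities hsum
  have hDJ : Disjoint D J := disjoint_sdiff_self_left.mono_right hJH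
  refine ⟨D ⊔ J, ⟨sup_le sdiff_le (hJH.trans hle),
    fun v => (hD v).trans (edeg_mono le_sup_left v)⟩, fun v => ?_⟩
  rw [← hDJ.symmDiff_eq_sup, cast_edeg_symmDiff, hJ, add_left_comm, CharTwo.add_self_eq_zero,
    add_zero]

theorem binary_factor_exists {V : Type*} [Fintype V]
    (G : SimpleGraph V) (hG : G.Connected) (hδ : ∀ v, 2 ≤ edeg G v)
    (H : SimpleGraph V) (hle : H ≤ G) (hHconn : H.Connected)
    (hHdeg : ∀ v, 1 ≤ edeg H v ∧ edeg H v < edeg G v)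
    (B : V → ZMod 2) (hB : Even {v : V | B v = 1}.ncard) :
    ∃ F : SimpleGraph V, IsFactor G F ∧ ∀ v, (edeg F v : ZMod 2) = B v :=
  binary_factor_exists_general G H hle hHconn hHdeg B hB
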